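/- arXiv:2410.04905 — 4 statements merged into one kernel-verified Lean document; each statement's English description precedes it below -/
import Mathlib

section
/- In the wreath product Z ≀ B with B abelian, an element (f, 1) is a commutator if and only if there exist t, t' ∈ B such that f lies in the ideal of Z[B] generated by 1 - Z^t and 1 - Z^{t'}. Consequently, the set of commutators of Z ≀ B is the union over t, t' ∈ B of ⟨1 - Z^t, 1 - Z^{t'}⟩ × {1}. -/
open MonoidAlgebra
open scoped commutatorElement

/-- `AddAut A` as multiplicative automorphisms of `Multiplicative A`. -/
def addAutToMulAut (A : Type*) [AddGroup A] : Multiplicative (AddAut A) →* MulAut (Multiplicative A) where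
  toFun e := AddEquiv.toMultiplicative e.toAdd
  map_one' := rfl
  map_mul' _ _ := rfl

/-- The action of `B` on (the additive group of) a commutative ring `R`
through a homomorphism `ψ : B →* Rˣ`, by multiplication. -/
def ringMulAction {R : Type*} [CommRing R] {B : Type*} [CommGroup B] (ψ : B →* Rˣ) :
    B →* MulAut (Multiplicative R) :=
  (addAutToMulAut R).comp (AddAut.mulLeft.comp ψ)

/-- The semidirect product `R ⋊ B` where `B` acts on the additive group of the
commutative ring `R` by multiplication via `ψ : B →* Rˣ`. -/
abbrev RingSemidirect (R : Type*) [CommRing R] {B : Type*} [CommGroup B] (ψ : B →* Rˣ) :=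
  SemidirectProduct (Multiplicative R) B (ringMulAction ψ)

/-- The element `(f, b)` of `R ⋊ B`. -/
abbrev RingSemidirect.mk {R : Type*} [CommRing R] {B : Type*} [CommGroup B] (ψ : B →* Rˣ)
    (f : R) (b : B) : RingSemidirect R ψ :=
  ⟨Multiplicative.ofAdd f, b⟩

/-- The canonical homomorphism `B →* (ℤ[B])ˣ`, sending `b` to the monomial `Z^b`. -/
noncomputable abbrev zUnits (B : Type*) [CommGroup B] : B →* (MonoidAlgebra ℤ B)ˣ :=
  (MonoidAlgebra.of ℤ B).toHomUnits

/-- The wreath product `ℤ ≀ B`, realized as `ℤ[B] ⋊ B` with `B` acting by multiplication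
by monomials. -/
abbrev ZWreath (B : Type*) [CommGroup B] := RingSemidirect (MonoidAlgebra ℤ B) (zUnits B)

/-- The element `(f, b)` of `ℤ ≀ B = ℤ[B] ⋊ B`. -/
noncomputable abbrev ZWreath.mk {B : Type*} [CommGroup B] (f : MonoidAlgebra ℤ B) (b : B) : ZWreath B :=
  RingSemidirect.mk (zUnits B) f b

/-! Since `B` is abelian, the commutator of `(a, s)` and `(b, u)` in `R ⋊ B` is
`((1 - ψ u) a - (1 - ψ s) b, 1)`; as `a` and `b` range over `R` these sweep out exactly the ideal
generated by `1 - ψ u` and `1 - ψ s`. -/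

namespace RingSemidirect

variable {R : Type*} [CommRing R] {B : Type*} [CommGroup B] (ψ : B →* Rˣ)

lemma ringMulAction_apply_ofAdd (b : B) (r : R) :
    ringMulAction ψ b (Multiplicative.ofAdd r) = Multiplicative.ofAdd ((ψ b : R) * r) := rfl

lemma mk_left_toAdd_right (g : RingSemidirect R ψ) : mk ψ g.left.toAdd g.right = g := rfl

lemma mk_left_injective (b : B) : Function.Injective (mk ψ · b) := fun _ _ h ↦
  Multiplicative.ofAdd.injective (congrArg SemidirectProduct.left h)

lemma commutatorElement_mk (a b : R) (s u : B) :
    ⁅mk ψ a s, mk ψ b u⁆ = mk ψ ((1 - (ψ u : R)) * a - (1 - (ψ s : R)) * b) 1 := by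
  ext
  · simp only [commutatorElement_def, RingSemidirect.mk, SemidirectProduct.mul_left,
      SemidirectProduct.inv_left, SemidirectProduct.mul_right, SemidirectProduct.inv_right,
      ringMulAction_apply_ofAdd, ← ofAdd_neg, ← ofAdd_add,
      EmbeddingLike.apply_eq_iff_eq]
    simp only [← mul_assoc, ← Units.val_mul, ← map_mul, mul_inv_cancel_comm, mul_inv_cancel,
      map_one, Units.val_one]
    ring
  · simp [commutatorElement_def, mul_comm]

theorem mk_one_eq_commutator_iff (f : R) :
    (∃ g h : RingSemidirect R ψ, mk ψ f 1 = ⁅g, h⁆) ↔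
      ∃ t t' : B, f ∈ Ideal.span ({1 - (ψ t : R), 1 - (ψ t' : R)} : Set R) := by
  simp only [Ideal.mem_span_pair]
  constructor
  · rintro ⟨g, h, hgh⟩
    rw [← mk_left_toAdd_right ψ g, ← mk_left_toAdd_right ψ h, commutatorElement_mk] at hgh
    exact ⟨h.right, g.right, g.left.toAdd, -h.left.toAdd, by rw [mk_left_injective ψ 1 hgh]; ring⟩
  · rintro ⟨t, t', c, d, rfl⟩
    exact ⟨mk ψ c t', mk ψ (-d) t, by rw [commutatorElement_mk]; congr 1; ring⟩

end RingSemidirect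

/-- In `ℤ ≀ B`, an element `(f, 1)` is a commutator iff there exist `t, t' ∈ B`
with `f` in the ideal of `ℤ[B]` generated by `1 - Z^t` and `1 - Z^{t'}`. -/
theorem isCommutator_iff_mem_span {B : Type*} [CommGroup B] (f : MonoidAlgebra ℤ B) :
    (∃ g h : ZWreath B, ZWreath.mk f 1 = ⁅g, h⁆) ↔
      ∃ t t' : B,
        f ∈ Ideal.span ({1 - MonoidAlgebra.of ℤ B t, 1 - MonoidAlgebra.of ℤ B t'} :
          Set (MonoidAlgebra ℤ B)) :=
  RingSemidirect.mk_one_eq_commutator_iff (zUnits B) f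
end

section
/- Let B = Z^d with d ≥ 1. The element d - Z₁ - Z₂ - ⋯ - Z_d of the Laurent polynomial ring Z[Z₁^{±1}, …, Z_d^{±1}] does not belong to any ideal generated by fewer than d elements of the form 1 - Z^t with t ∈ Z^d. -/
open MonoidAlgebra

/-!
Fewer than `d` vectors `t_j ∈ ℤ^d` are annihilated by a nonzero rational functional `x`.
The ring map `ℤ[ℤ^d] → ℤ[ℚ]` induced by `v ↦ ⟨x, v⟩` kills every `1 - Z^{t_j}`, but sends
`d - Z₁ - ⋯ - Z_d` to `d - ∑ [x_i]`, whose coefficient at `0` is `d - #{i | x_i = 0} > 0`.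
-/

/-- The monomial `Z^t` in the group ring `ℤ[ℤ^d]`, identified with the Laurent
polynomial ring in `d` variables. -/
noncomputable abbrev ZMon (d : ℕ) (t : Fin d → ℤ) :
    MonoidAlgebra ℤ (Multiplicative (Fin d → ℤ)) :=
  MonoidAlgebra.of ℤ (Multiplicative (Fin d → ℤ)) (Multiplicative.ofAdd t)

theorem Matrix.exists_ne_zero_forall_dotProduct_eq_zero {K ι κ : Type*} [Field K] [Fintype ι]
    [Fintype κ] (hcard : Fintype.card κ < Fintype.card ι) (v : κ → ι → K) :
    ∃ x : ι → K, x ≠ 0 ∧ ∀ j, v j ⬝ᵥ x = 0 := by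
  have hker : LinearMap.ker (Matrix.of v).mulVecLin ≠ ⊥ :=
    LinearMap.ker_ne_bot_of_finrank_lt (by simpa using hcard)
  obtain ⟨x, hx, hx0⟩ := (Submodule.ne_bot_iff _).mp hker
  exact ⟨x, hx0, fun j => congrFun hx j⟩

namespace MonoidAlgebra

variable {R M N : Type*} [Ring R] [Monoid M] [Monoid N]

theorem span_range_one_sub_le_ker_mapDomainRingHom {ι : Type*} (f : M →* N) {s : ι → M}
    (hs : ∀ j, f (s j) = 1) :
    Ideal.span (Set.range fun j => 1 - of R M (s j)) ≤ RingHom.ker (mapDomainRingHom R f) := by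
  rw [Ideal.span_le]
  rintro _ ⟨j, rfl⟩
  rw [SetLike.mem_coe, RingHom.mem_ker, map_sub, map_one, mapDomainRingHom_apply, of_apply,
    mapDomain_single, hs j, ← one_def, sub_self]

theorem natCast_card_sub_sum_ne_zero [CharZero R] {ι : Type*} [Fintype ι] {h : ι → N}
    (hne : ∃ i, h i ≠ 1) :
    (Fintype.card ι : R[N]) - ∑ i, of R N (h i) ≠ 0 := by
  classical
  intro h0
  have hcoeff := congrArg (fun a : R[N] => a.coeff 1) (sub_eq_zero.mp h0)
  simp only [coeff_natCast, Finsupp.single_eq_same, of_apply, coeff_sum, coeff_single,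
    Finsupp.coe_finsetSum, Finset.sum_apply, Finsupp.single_apply, Finset.sum_boole,
    Nat.cast_inj] at hcoeff
  obtain ⟨i, hi⟩ := hne
  exact hi (Finset.card_filter_eq_iff.mp hcoeff.symm i (Finset.mem_univ i))

end MonoidAlgebra

theorem d_sub_sum_not_mem_span_general (d : ℕ) (k : ℕ) (hk : k < d)
    (t : Fin k → (Fin d → ℤ)) :
    ((d : MonoidAlgebra ℤ (Multiplicative (Fin d → ℤ))) -
        ∑ i : Fin d, ZMon d (Pi.single i 1)) ∉
      Ideal.span (Set.range fun j => 1 - ZMon d (t j)) := by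
  obtain ⟨x, hx0, hx⟩ := Matrix.exists_ne_zero_forall_dotProduct_eq_zero
    (by simpa using hk) fun j i => (t j i : ℚ)
  let φ := AddMonoidHom.toMultiplicative (Fintype.linearCombination ℤ x).toAddMonoidHom
  have hφt : ∀ j, φ (.ofAdd (t j)) = 1 := by
    intro j
    change Multiplicative.ofAdd (Fintype.linearCombination ℤ x (t j)) = 1
    rw [ofAdd_eq_one]
    simpa [Fintype.linearCombination_apply, dotProduct, mul_comm] using hx j
  have hφZ : ∀ i, φ (.ofAdd (Pi.single i 1)) = .ofAdd (x i) := by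
    simp [φ]
  intro hmem
  have hF := span_range_one_sub_le_ker_mapDomainRingHom φ hφt hmem
  rw [RingHom.mem_ker, map_sub, map_natCast, map_sum] at hF
  refine natCast_card_sub_sum_ne_zero (R := ℤ) (h := fun i => Multiplicative.ofAdd (x i)) ?_ ?_
  · simpa using Function.ne_iff.mp hx0
  · simpa [hφZ] using hF

/-- The element `d - Z₁ - ⋯ - Z_d` of `ℤ[Z₁^{±1},…,Z_d^{±1}]` does not belong to any
ideal generated by fewer than `d` elements of the form `1 - Z^t`. -/
theorem d_sub_sum_not_mem_span (d : ℕ) (hd : 1 ≤ d) (k : ℕ) (hk : k < d)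
    (t : Fin k → (Fin d → ℤ)) :
    ((d : MonoidAlgebra ℤ (Multiplicative (Fin d → ℤ))) -
        ∑ i : Fin d, ZMon d (Pi.single i 1)) ∉
      Ideal.span (Set.range fun j => 1 - ZMon d (t j)) :=
  d_sub_sum_not_mem_span_general d k hk t
end

section
/- The Baumslag group Γ = (Z[Z₁^{±1},Z₂^{±1}]/(1+Z₁-Z₂)) ⋊ Z² has commutator width exactly 1: every element of its derived subgroup is a single commutator, and Γ is not abelian. -/
open MonoidAlgebra
open scoped commutatorElement

noncomputable section

/-- `ℤ²`, written multiplicatively. -/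
abbrev B2 := Multiplicative (Fin 2 → ℤ)

/-- The Laurent monomial `Z₁`. -/
abbrev Z1 : MonoidAlgebra ℤ B2 :=
  MonoidAlgebra.of ℤ B2 (Multiplicative.ofAdd (Pi.single 0 1))

/-- The Laurent monomial `Z₂`. -/
abbrev Z2 : MonoidAlgebra ℤ B2 :=
  MonoidAlgebra.of ℤ B2 (Multiplicative.ofAdd (Pi.single 1 1))

/-- The ideal `(1 + Z₁ - Z₂)` of `ℤ[Z₁^{±1}, Z₂^{±1}]`. -/
abbrev baumslagIdeal : Ideal (MonoidAlgebra ℤ B2) := Ideal.span {1 + Z1 - Z2}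

/-- The ring `ℤ[Z₁^{±1}, Z₂^{±1}]/(1 + Z₁ - Z₂)`. -/
abbrev BaumslagRing := MonoidAlgebra ℤ B2 ⧸ baumslagIdeal

/-- The action of `ℤ²` on the Baumslag ring by multiplication by `Z₁` and `Z₂`. -/
abbrev baumslagUnits : B2 →* BaumslagRingˣ :=
  (Units.map (Ideal.Quotient.mk baumslagIdeal).toMonoidHom).comp (zUnits B2)

/-- The Baumslag group, realized as `(ℤ[Z₁^{±1}, Z₂^{±1}]/(1 + Z₁ - Z₂)) ⋊ ℤ²`. -/
abbrev BaumslagGroup := RingSemidirect BaumslagRing baumslagUnits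

/-- The element `(f, b)` of the Baumslag group. -/
abbrev BaumslagGroup.mk (f : BaumslagRing) (b : B2) : BaumslagGroup :=
  RingSemidirect.mk baumslagUnits f b

/-- The relators `[t,u]`, `[a, a^t]`, `a^u·(a·a^t)⁻¹` of the Baumslag presentation, on
generators `a = 0`, `t = 1`, `u = 2`. -/
def baumslagRels : Set (FreeGroup (Fin 3)) :=
  let a : FreeGroup (Fin 3) := FreeGroup.of 0
  let t : FreeGroup (Fin 3) := FreeGroup.of 1
  let u : FreeGroup (Fin 3) := FreeGroup.of 2
  { ⁅t, u⁆, ⁅a, t⁻¹ * a * t⁆, u⁻¹ * a * u * (a * (t⁻¹ * a * t))⁻¹ }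

end

/-!
In `R ⋊ B` with `B` abelian acting on `R` by multiplication, the derived subgroup lies in `R`,
and `⁅(a, 1), (0, c)⁆ = ((1 - c) a, 1)`. Hence if `1 - c` is a unit of `R` for some `c`, every
element of the derived subgroup is a single commutator, and if moreover `R ≠ 0` the group is not
abelian. In the Baumslag ring `1 - Z₂ = -Z₁` is a unit, and the ring is nonzero because
`Z₁ ↦ 1, Z₂ ↦ 2` kills `1 + Z₁ - Z₂` and so defines a ring map to `ℚ`.
-/

namespace RingSemidirect

variable {R : Type*} [CommRing R] {B : Type*} [CommGroup B] (ψ : B →* Rˣ)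

@[simp]
theorem _root_.ringMulAction_apply (b : B) (r : Multiplicative R) :
    ringMulAction ψ b r = Multiplicative.ofAdd (ψ b * Multiplicative.toAdd r) :=
  rfl

theorem eq_mk_of_mem_commutator {x : RingSemidirect R ψ} (hx : x ∈ commutator _) :
    x = mk ψ (Multiplicative.toAdd x.left) 1 :=
  SemidirectProduct.ext rfl (Abelianization.commutator_subset_ker SemidirectProduct.rightHom hx)

theorem commutatorElement_mk_mk (a : R) (c : B) :
    ⁅mk ψ a 1, mk ψ 0 c⁆ = mk ψ ((1 - ψ c) * a) 1 := by
  ext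
  · simp only [commutatorElement_def, SemidirectProduct.mul_left, SemidirectProduct.inv_left,
      SemidirectProduct.mul_right, SemidirectProduct.inv_right, ringMulAction_apply, map_one,
      map_inv, MulAut.one_apply, inv_one, mul_one, one_mul, toAdd_ofAdd, toAdd_mul, toAdd_inv,
      ofAdd_zero]
    ring
  · simp [-SemidirectProduct.mk_eq_inl_mul_inr, commutatorElement_def]

theorem exists_eq_commutatorElement_of_isUnit {c : B} (hc : IsUnit (1 - (ψ c : R)))
    {x : RingSemidirect R ψ} (hx : x ∈ commutator _) : ∃ g h : RingSemidirect R ψ, x = ⁅g, h⁆ := by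
  obtain ⟨u, hu⟩ := hc
  refine ⟨mk ψ (↑u⁻¹ * Multiplicative.toAdd x.left) 1, mk ψ 0 c, ?_⟩
  rw [commutatorElement_mk_mk, ← hu, Units.mul_inv_cancel_left]
  exact eq_mk_of_mem_commutator ψ hx

theorem mk_one_mul_mk_ne_of_isUnit [Nontrivial R] {c : B} (hc : IsUnit (1 - (ψ c : R))) :
    mk ψ 1 1 * mk ψ 0 c ≠ mk ψ 0 c * mk ψ 1 1 := by
  rw [Ne, ← commutatorElement_eq_one_iff_mul_comm, commutatorElement_mk_mk, mul_one]
  intro h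
  exact hc.ne_zero (congrArg (fun g => Multiplicative.toAdd g.left) h)

end RingSemidirect

instance : Nontrivial BaumslagRing := by
  let χ : B2 →* ℚ := (Units.coeHom ℚ).comp ((zpowersHom ℚˣ (Units.mk0 2 two_ne_zero)).comp
    (AddMonoidHom.toMultiplicative (Pi.evalAddMonoidHom (fun _ => ℤ) 1)))
  let ev := MonoidAlgebra.lift ℤ ℚ B2 χ
  have hle : baumslagIdeal ≤ RingHom.ker ev := by
    rw [Ideal.span_le, Set.singleton_subset_iff]
    norm_num [ev, χ, Z1, Z2]
  exact (Ideal.Quotient.lift _ (ev : MonoidAlgebra ℤ B2 →+* ℚ) hle).domain_nontrivial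

theorem isUnit_one_sub_baumslagUnits_single_one :
    IsUnit (1 - (baumslagUnits (Multiplicative.ofAdd (Pi.single 1 1)) : BaumslagRing)) := by
  have hrel : Ideal.Quotient.mk baumslagIdeal (1 + Z1 - Z2) = 0 :=
    Ideal.Quotient.eq_zero_iff_mem.mpr (Ideal.mem_span_singleton_self _)
  have hZ2 : 1 - (baumslagUnits (Multiplicative.ofAdd (Pi.single 1 1)) : BaumslagRing) =
      -(baumslagUnits (Multiplicative.ofAdd (Pi.single 0 1)) : BaumslagRing) := by
    rw [map_sub, map_add, map_one] at hrel
    change 1 - Ideal.Quotient.mk baumslagIdeal Z2 = -Ideal.Quotient.mk baumslagIdeal Z1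
    linear_combination hrel
  rw [hZ2]
  exact (baumslagUnits _).isUnit.neg

/-- The Baumslag group `(ℤ[Z₁^{±1},Z₂^{±1}]/(1+Z₁-Z₂)) ⋊ ℤ²` has commutator width
exactly `1`: every element of its derived subgroup is a single commutator, and the group
is not abelian. -/
theorem baumslag_commutatorWidth_one :
    (∀ x ∈ commutator BaumslagGroup, ∃ g h : BaumslagGroup, x = ⁅g, h⁆) ∧
    (∃ g h : BaumslagGroup, g * h ≠ h * g) := by
  have hunit := isUnit_one_sub_baumslagUnits_single_one
  exact ⟨fun _ => RingSemidirect.exists_eq_commutatorElement_of_isUnit _ hunit,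
    ⟨_, _, RingSemidirect.mk_one_mul_mk_ne_of_isUnit _ hunit⟩⟩
end

section
/- Let Φ ∈ Z[Y] be a nonzero polynomial with at most B nonzero monomials. If (Y+1)^b divides Φ, then b ≤ B - 1. -/
open Polynomial

lemma sparse_aux : ∀ b : ℕ, ∀ Φ : Polynomial ℤ, Φ ≠ 0 →
    (Polynomial.X + 1) ^ b ∣ Φ → b + 1 ≤ Φ.support.card := by
  intro b
  induction b with
  | zero =>
    intro Φ h0 _
    simpa using Finset.Nonempty.card_pos (support_nonempty.2 h0)
  | succ b ih =>
    intro Φ h0 hdvd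
    obtain ⟨Ψ, hΦ, hnd⟩ := Φ.exists_eq_pow_rootMultiplicity_mul_and_not_dvd h0 0
    set k := Φ.rootMultiplicity 0 with hk
    simp only [map_zero, sub_zero] at hΦ hnd
    have hΨ0 : Ψ ≠ 0 := by rintro rfl; simp [hΦ] at h0
    have hc0 : Ψ.coeff 0 ≠ 0 := fun h => hnd (X_dvd_iff.2 h)
    have hcop : IsCoprime ((X:Polynomial ℤ) + 1) X := ⟨1, -1, by ring⟩
    have hdvdΨ : (X + 1) ^ (b + 1) ∣ Ψ := by
      rw [hΦ] at hdvd
      exact (hcop.pow).dvd_of_dvd_mul_left hdvd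
    obtain ⟨q, hq⟩ := hdvdΨ
    have hdder : (X + 1) ^ b ∣ derivative Ψ := by
      refine ⟨C ((b:ℤ) + 1) * q + (X + 1) * derivative q, ?_⟩
      rw [hq, derivative_mul, derivative_pow, derivative_add, derivative_X,
        derivative_one]
      push_cast
      ring
    have hdeg : 1 ≤ Ψ.natDegree := by
      have h1 : (X + 1 : Polynomial ℤ) ∣ Ψ :=
        dvd_trans (dvd_pow_self _ (Nat.succ_ne_zero b)) ⟨q, hq⟩
      have h2 := natDegree_le_of_dvd h1 hΨ0
      rwa [show ((X : Polynomial ℤ) + 1) = X + C 1 by simp, natDegree_X_add_C] at h2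
    have hder0 : derivative Ψ ≠ 0 := by
      intro h
      have := natDegree_eq_zero_of_derivative_eq_zero h
      omega
    have hIH := ih (derivative Ψ) hder0 hdder
    -- derivative support bound
    have hsub : (derivative Ψ).support.image (· + 1) ⊆ Ψ.support.erase 0 := by
      intro n hn
      obtain ⟨m, hm, rfl⟩ := Finset.mem_image.1 hn
      rw [mem_support_iff, coeff_derivative] at hm
      refine Finset.mem_erase.2 ⟨Nat.succ_ne_zero m, mem_support_iff.2 ?_⟩
      intro h
      exact hm (by simp [h])
    have hcard1 : (derivative Ψ).support.card + 1 ≤ Ψ.support.card := by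
      have h1 : ((derivative Ψ).support.image (· + 1)).card = (derivative Ψ).support.card :=
        Finset.card_image_of_injective _ (add_left_injective 1)
      have h2 := Finset.card_le_card hsub
      have h3 : (Ψ.support.erase 0).card = Ψ.support.card - 1 :=
        Finset.card_erase_of_mem (mem_support_iff.2 hc0)
      have h4 : 1 ≤ Ψ.support.card := Finset.card_pos.2 ⟨0, mem_support_iff.2 hc0⟩
      omega
    -- support of Φ = X^k * Ψ has same card as Ψ (at least ≥)
    have hcard2 : Ψ.support.card ≤ Φ.support.card := by
      have hsub2 : Ψ.support.image (· + k) ⊆ Φ.support := by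
        intro n hn
        obtain ⟨m, hm, rfl⟩ := Finset.mem_image.1 hn
        rw [mem_support_iff] at hm ⊢
        have : Φ = Ψ * X ^ k := by rw [hΦ]; ring
        rw [this, coeff_mul_X_pow]
        exact hm
      calc Ψ.support.card = (Ψ.support.image (· + k)).card :=
            (Finset.card_image_of_injective _ (add_left_injective k)).symm
        _ ≤ Φ.support.card := Finset.card_le_card hsub2
    omega

/-- If a nonzero integer polynomial `Φ` has at most `B` nonzero monomials and is
divisible by `(Y+1)^b`, then `b ≤ B - 1`. -/
theorem pow_add_one_dvd_sparse (Φ : Polynomial ℤ) (B b : ℕ) (h0 : Φ ≠ 0)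
    (hB : Φ.support.card ≤ B) (hdvd : (Polynomial.X + 1) ^ b ∣ Φ) : b ≤ B - 1 := by
  have := sparse_aux b Φ h0 hdvd
  omega
end
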